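/- Under the same assumptions (double finiteness of (Γ,Δ) and finiteness of M/(AM ∩ MA) for all A ∈ Δ), the pair (Γ̃, Δ̃) is double finite: for every (A,a) ∈ Δ̃, both Γ̃\Γ̃(A,a)Γ̃ and Γ̃(A,a)Γ̃/Γ̃ are finite sets. -/

import Mathlib

/-! STATEMENT 4: under the standing finiteness assumptions, the twisted pair
`(Γ̃, Δ̃)` is double finite. -/

/-- The twisted product `(A,a)(B,b) = (AB, A·b + a·B)` on `G × M`. -/
def tmul {G M : Type*} [Group G] [AddCommGroup M] (l r : G → M →+ M)
    (x y : G × M) : G × M :=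
  (x.1 * y.1, l x.1 y.2 + r y.1 x.2)

/-- Left coset `Γ̃ x` in the twisted monoid, where `Γ̃ = Γ × M`. -/
def tlcoset {G M : Type*} [Group G] [AddCommGroup M] (l r : G → M →+ M)
    (Γ : Set G) (x : G × M) : Set (G × M) :=
  {z | ∃ g : G × M, g.1 ∈ Γ ∧ z = tmul l r g x}

/-- Right coset `x Γ̃` in the twisted monoid. -/
def trcoset {G M : Type*} [Group G] [AddCommGroup M] (l r : G → M →+ M)
    (Γ : Set G) (x : G × M) : Set (G × M) :=
  {z | ∃ g : G × M, g.1 ∈ Γ ∧ z = tmul l r x g}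

/-- The double coset `Γ̃ x Γ̃` in the twisted monoid. -/
def tdcoset {G M : Type*} [Group G] [AddCommGroup M] (l r : G → M →+ M)
    (Γ : Set G) (x : G × M) : Set (G × M) :=
  {z | ∃ g h : G × M, g.1 ∈ Γ ∧ h.1 ∈ Γ ∧ z = tmul l r (tmul l r g x) h}

/-- Left coset `Γ x` in `G`. -/
def lcosetG {G : Type*} [Group G] (Γ : Set G) (x : G) : Set G :=
  {z | ∃ g ∈ Γ, z = g * x}

/-- Right coset `x Γ` in `G`. -/
def rcosetG {G : Type*} [Group G] (Γ : Set G) (x : G) : Set G :=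
  {z | ∃ g ∈ Γ, z = x * g}

/-- Double coset `Γ x Γ` in `G`. -/
def dcosetG {G : Type*} [Group G] (Γ : Set G) (x : G) : Set G :=
  {z | ∃ g ∈ Γ, ∃ h ∈ Γ, z = g * x * h}

/-! The twisted left coset `Γ̃ (B, x)` projects onto `Γ B`, so the twisted left cosets inside
`Γ̃ (A, a) Γ̃` lie in finitely many fibres, one over each left `Γ`-coset in `Γ A Γ`. In the fibre over
`Γ B` every twisted coset is some `Γ̃ (B, x)`, and since `(1, m)(B, x) = (B, x + m·B)` it depends
only on the class of `x` in `M / MB`, a quotient of the finite group `M / (BM ∩ MB)`. Right cosets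
are handled symmetrically, with `M / BM`. -/

structure IsTwistedBimodule {G M : Type*} [Group G] [AddCommGroup M] (l r : G → M →+ M) :
    Prop where
  left_one : l 1 = AddMonoidHom.id M
  left_mul : ∀ g h : G, l (g * h) = (l g).comp (l h)
  right_one : r 1 = AddMonoidHom.id M
  right_mul : ∀ g h : G, r (g * h) = (r h).comp (r g)
  left_right_comm : ∀ (g h : G) (m : M), l g (r h m) = r h (l g m)

theorem finite_range_of_add_mem {M α : Type*} [AddGroup M] (K : AddSubgroup M) [Finite (M ⧸ K)]
    (f : M → α) (hf : ∀ x, ∀ k ∈ K, f (x + k) = f x) : (Set.range f).Finite := by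
  refine (Set.finite_range fun q : M ⧸ K => f q.out).subset ?_
  rintro _ ⟨x, rfl⟩
  have hk : -x + (x : M ⧸ K).out ∈ K := QuotientAddGroup.eq.mp (QuotientAddGroup.out_eq' _).symm
  exact ⟨x, (congrArg f (add_neg_cancel_left x _)).symm.trans (hf x _ hk)⟩

theorem finite_quotient_of_le {M : Type*} [AddGroup M] {H K : AddSubgroup M}
    (hH : Finite (M ⧸ H)) (hHK : H ≤ K) : Finite (M ⧸ K) :=
  have := H.finiteIndex_of_finite_quotient
  have := AddSubgroup.finiteIndex_of_le hHK
  K.finite_quotient_of_finiteIndex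

theorem setOf_exists_mem_eq_image {α β : Type*} (f : α → β) (D : Set α) :
    {S | ∃ d ∈ D, S = f d} = f '' D := by
  ext S
  simp [eq_comm]

section Cosets

variable {G M : Type*} [Group G] [AddCommGroup M]

theorem mem_lcosetG_self (Γ : Subgroup G) (x : G) : x ∈ lcosetG (Γ : Set G) x :=
  ⟨1, Γ.one_mem, (one_mul x).symm⟩

theorem mem_rcosetG_self (Γ : Subgroup G) (x : G) : x ∈ rcosetG (Γ : Set G) x :=
  ⟨1, Γ.one_mem, (mul_one x).symm⟩

theorem dcosetG_subset {Γ : Subgroup G} {Δ : Submonoid G} (hΓΔ : (Γ : Set G) ⊆ Δ) {A : G}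
    (hA : A ∈ Δ) : dcosetG (Γ : Set G) A ⊆ Δ := by
  rintro _ ⟨g, hg, k, hk, rfl⟩
  exact Δ.mul_mem (Δ.mul_mem (hΓΔ hg) hA) (hΓΔ hk)

theorem fst_mem_dcosetG_of_mem_tdcoset {l r : G → M →+ M} {Γ : Set G} {x d : G × M}
    (hd : d ∈ tdcoset l r Γ x) : d.1 ∈ dcosetG Γ x.1 := by
  obtain ⟨g, k, hg, hk, rfl⟩ := hd
  exact ⟨g.1, hg, k.1, hk, rfl⟩

theorem fst_image_tlcoset (l r : G → M →+ M) (Γ : Set G) (x : G × M) :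
    Prod.fst '' tlcoset l r Γ x = lcosetG Γ x.1 := by
  ext z
  constructor
  · rintro ⟨_, ⟨g, hg, rfl⟩, rfl⟩
    exact ⟨g.1, hg, rfl⟩
  · rintro ⟨γ, hγ, rfl⟩
    exact ⟨_, ⟨(γ, 0), hγ, rfl⟩, rfl⟩

theorem fst_image_trcoset (l r : G → M →+ M) (Γ : Set G) (x : G × M) :
    Prod.fst '' trcoset l r Γ x = rcosetG Γ x.1 := by
  ext z
  constructor
  · rintro ⟨_, ⟨g, hg, rfl⟩, rfl⟩
    exact ⟨g.1, hg, rfl⟩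
  · rintro ⟨γ, hγ, rfl⟩
    exact ⟨_, ⟨(γ, 0), hγ, rfl⟩, rfl⟩

end Cosets

def tinv {G M : Type*} [Group G] [AddCommGroup M] (l r : G → M →+ M) (x : G × M) : G × M :=
  (x.1⁻¹, -l x.1⁻¹ (r x.1⁻¹ x.2))

namespace IsTwistedBimodule

variable {G M : Type*} [Group G] [AddCommGroup M] {l r : G → M →+ M}
  (h : IsTwistedBimodule l r)
include h

theorem left_mul_inv_apply (g : G) (m : M) : l g (l g⁻¹ m) = m := by
  rw [← AddMonoidHom.comp_apply, ← h.left_mul, mul_inv_cancel, h.left_one, AddMonoidHom.id_apply]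

theorem right_inv_mul_apply (g : G) (m : M) : r g (r g⁻¹ m) = m := by
  rw [← AddMonoidHom.comp_apply, ← h.right_mul, inv_mul_cancel, h.right_one,
    AddMonoidHom.id_apply]

theorem tmul_assoc (x y z : G × M) :
    tmul l r (tmul l r x y) z = tmul l r x (tmul l r y z) := by
  simp only [tmul, Prod.mk.injEq, h.left_mul, h.right_mul, AddMonoidHom.comp_apply, map_add]
  refine ⟨mul_assoc _ _ _, ?_⟩
  rw [h.left_right_comm]
  abel

theorem one_tmul (x : G × M) : tmul l r (1, 0) x = x := by
  simp [tmul, h.left_one]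

theorem tmul_one (x : G × M) : tmul l r x (1, 0) = x := by
  simp [tmul, h.right_one]

theorem tinv_tmul (x : G × M) : tmul l r (tinv l r x) x = (1, 0) := by
  simp only [tmul, tinv, Prod.mk.injEq, inv_mul_cancel, map_neg, true_and]
  rw [← h.left_right_comm, h.right_inv_mul_apply, add_neg_cancel]

theorem tmul_tinv (x : G × M) : tmul l r x (tinv l r x) = (1, 0) := by
  simp only [tmul, tinv, Prod.mk.injEq, mul_inv_cancel, map_neg, true_and]
  rw [h.left_mul_inv_apply, neg_add_cancel]

variable (Γ : Subgroup G)

theorem tlcoset_tmul {g : G × M} (hg : g.1 ∈ Γ) (x : G × M) :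
    tlcoset l r Γ (tmul l r g x) = tlcoset l r Γ x := by
  ext z
  constructor
  · rintro ⟨k, hk, rfl⟩
    exact ⟨tmul l r k g, Γ.mul_mem hk hg, (h.tmul_assoc k g x).symm⟩
  · rintro ⟨k, hk, rfl⟩
    refine ⟨tmul l r k (tinv l r g), Γ.mul_mem hk (Γ.inv_mem hg), ?_⟩
    rw [h.tmul_assoc, ← h.tmul_assoc (tinv l r g), h.tinv_tmul, h.one_tmul]

theorem trcoset_tmul {g : G × M} (hg : g.1 ∈ Γ) (x : G × M) :
    trcoset l r Γ (tmul l r x g) = trcoset l r Γ x := by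
  ext z
  constructor
  · rintro ⟨k, hk, rfl⟩
    exact ⟨tmul l r g k, Γ.mul_mem hg hk, h.tmul_assoc x g k⟩
  · rintro ⟨k, hk, rfl⟩
    refine ⟨tmul l r (tinv l r g) k, Γ.mul_mem (Γ.inv_mem hg) hk, ?_⟩
    rw [← h.tmul_assoc, h.tmul_assoc x, h.tmul_tinv, h.tmul_one]

theorem tlcoset_add_right (w : G) (x m : M) :
    tlcoset l r Γ (w, x + r w m) = tlcoset l r Γ (w, x) := by
  convert h.tlcoset_tmul Γ (g := (1, m)) Γ.one_mem (w, x) using 2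
  simp [tmul, h.left_one]

theorem trcoset_add_left (w : G) (x m : M) :
    trcoset l r Γ (w, x + l w m) = trcoset l r Γ (w, x) := by
  convert h.trcoset_tmul Γ (g := (1, m)) Γ.one_mem (w, x) using 2
  simp [tmul, h.right_one, add_comm]

theorem tlcoset_mul_left {γ : G} (hγ : γ ∈ Γ) (w : G) (m : M) :
    tlcoset l r Γ (γ * w, m) = tlcoset l r Γ (w, l γ⁻¹ m) := by
  convert h.tlcoset_tmul Γ (g := (γ, 0)) hγ (w, l γ⁻¹ m) using 2
  simp [tmul, h.left_mul_inv_apply]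

theorem trcoset_mul_right {γ : G} (hγ : γ ∈ Γ) (w : G) (m : M) :
    trcoset l r Γ (w * γ, m) = trcoset l r Γ (w, r γ⁻¹ m) := by
  convert h.trcoset_tmul Γ (g := (γ, 0)) hγ (w, r γ⁻¹ m) using 2
  simp [tmul, h.right_inv_mul_apply]

theorem finite_range_tlcoset (w : G) [Finite (M ⧸ (r w).range)] :
    (Set.range fun x => tlcoset l r Γ (w, x)).Finite :=
  finite_range_of_add_mem (r w).range _ fun x _ hk => by
    obtain ⟨m, rfl⟩ := AddMonoidHom.mem_range.mp hk
    exact h.tlcoset_add_right Γ w x m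

theorem finite_range_trcoset (w : G) [Finite (M ⧸ (l w).range)] :
    (Set.range fun x => trcoset l r Γ (w, x)).Finite :=
  finite_range_of_add_mem (l w).range _ fun x _ hk => by
    obtain ⟨m, rfl⟩ := AddMonoidHom.mem_range.mp hk
    exact h.trcoset_add_left Γ w x m

theorem finite_image_tlcoset {D : Set (G × M)} (hD : ∀ d ∈ D, Finite (M ⧸ (r d.1).range))
    (hbase : ((fun d => lcosetG (Γ : Set G) d.1) '' D).Finite) :
    (tlcoset l r Γ '' D).Finite := by
  refine Set.Finite.of_finite_fibers (Set.image Prod.fst) ?_ ?_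
  · rw [Set.image_image]
    simpa only [fst_image_tlcoset] using hbase
  · rintro _ ⟨_, ⟨d₀, hd₀, rfl⟩, rfl⟩
    have := hD d₀ hd₀
    refine (h.finite_range_tlcoset Γ d₀.1).subset ?_
    rintro _ ⟨⟨d, hd, rfl⟩, hfib⟩
    simp only [Set.mem_preimage, Set.mem_singleton_iff, fst_image_tlcoset] at hfib
    obtain ⟨γ, hγ, hd₁⟩ : d.1 ∈ lcosetG (Γ : Set G) d₀.1 := hfib ▸ mem_lcosetG_self Γ d.1
    exact ⟨l γ⁻¹ d.2, (h.tlcoset_mul_left Γ hγ _ _).symm.trans (by rw [← hd₁])⟩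

theorem finite_image_trcoset {D : Set (G × M)} (hD : ∀ d ∈ D, Finite (M ⧸ (l d.1).range))
    (hbase : ((fun d => rcosetG (Γ : Set G) d.1) '' D).Finite) :
    (trcoset l r Γ '' D).Finite := by
  refine Set.Finite.of_finite_fibers (Set.image Prod.fst) ?_ ?_
  · rw [Set.image_image]
    simpa only [fst_image_trcoset] using hbase
  · rintro _ ⟨_, ⟨d₀, hd₀, rfl⟩, rfl⟩
    have := hD d₀ hd₀
    refine (h.finite_range_trcoset Γ d₀.1).subset ?_
    rintro _ ⟨⟨d, hd, rfl⟩, hfib⟩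
    simp only [Set.mem_preimage, Set.mem_singleton_iff, fst_image_trcoset] at hfib
    obtain ⟨γ, hγ, hd₁⟩ : d.1 ∈ rcosetG (Γ : Set G) d₀.1 := hfib ▸ mem_rcosetG_self Γ d.1
    exact ⟨r γ⁻¹ d.2, (h.trcoset_mul_right Γ hγ _ _).symm.trans (by rw [← hd₁])⟩

end IsTwistedBimodule

theorem twisted_pair_double_finite {G M : Type*} [Group G] [AddCommGroup M]
    (l r : G → M →+ M)
    (hl1 : l 1 = AddMonoidHom.id M)
    (hlm : ∀ g h : G, l (g * h) = (l g).comp (l h))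
    (hr1 : r 1 = AddMonoidHom.id M)
    (hrm : ∀ g h : G, r (g * h) = (r h).comp (r g))
    (hcomm : ∀ (g h : G) (m : M), l g (r h m) = r h (l g m))
    (Γ : Subgroup G) (Δ : Submonoid G) (hΓΔ : (Γ : Set G) ⊆ (Δ : Set G))
    -- `(Γ, Δ)` is a double finite pair:
    (hdf : ∀ B ∈ Δ,
      {S : Set G | ∃ d ∈ dcosetG (Γ : Set G) B, S = lcosetG (Γ : Set G) d}.Finite ∧
      {S : Set G | ∃ d ∈ dcosetG (Γ : Set G) B, S = rcosetG (Γ : Set G) d}.Finite)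
    -- `M/(BM ∩ MB)` is finite for every `B ∈ Δ`:
    (hfin : ∀ B ∈ Δ, Finite (M ⧸ ((l B).range ⊓ (r B).range : AddSubgroup M))) :
    ∀ A : G, A ∈ Δ → ∀ a : M,
      {S : Set (G × M) |
        ∃ d ∈ tdcoset l r (Γ : Set G) (A, a), S = tlcoset l r (Γ : Set G) d}.Finite ∧
      {S : Set (G × M) |
        ∃ d ∈ tdcoset l r (Γ : Set G) (A, a), S = trcoset l r (Γ : Set G) d}.Finite := by
  intro A hA a
  have hM : IsTwistedBimodule l r := ⟨hl1, hlm, hr1, hrm, hcomm⟩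
  have hfst {d : G × M} (hd : d ∈ tdcoset l r Γ (A, a)) : d.1 ∈ Δ :=
    dcosetG_subset hΓΔ hA (fst_mem_dcosetG_of_mem_tdcoset hd)
  simp only [setOf_exists_mem_eq_image] at hdf ⊢
  constructor
  · refine hM.finite_image_tlcoset Γ
      (fun _ hd => finite_quotient_of_le (hfin _ (hfst hd)) inf_le_right)
      ((hdf A hA).1.subset ?_)
    rintro _ ⟨d, hd, rfl⟩
    exact ⟨d.1, fst_mem_dcosetG_of_mem_tdcoset hd, rfl⟩
  · refine hM.finite_image_trcoset Γ
      (fun _ hd => finite_quotient_of_le (hfin _ (hfst hd)) inf_le_left)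
      ((hdf A hA).2.subset ?_)
    rintro _ ⟨d, hd, rfl⟩
    exact ⟨d.1, fst_mem_dcosetG_of_mem_tdcoset hd, rfl⟩
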